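/- arXiv:2012.05511 — 5 statements merged into one kernel-verified Lean document; each statement's English description precedes it below -/
import Mathlib

section
/- (Lemma 1) Let γ = log₂(V(z|u)/P(z)) - b be the correct-path metric with u uniform on {0,1} and z ~ V(·|u). For any r₀ ∈ (-1,0), the semi-invariant moment generating function satisfies h(r₀) := log₂ E[2^{r₀γ}] ≤ -r₀ b - (1+r₀) E_0(-r₀/(1+r₀), V), where E_0(ρ,V) = -log₂ Σ_z [Σ_u (1/2) V(z|u)^{1/(1+ρ)}]^{1+ρ}. -/
/-- Gallager's function `E₀(ρ, V)` for a binary-input channel `V` with uniform input. -/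
noncomputable def E0 {Z : Type*} [Fintype Z] (ρ : ℝ) (V : Bool → Z → ℝ) : ℝ :=
  -Real.logb 2 (∑ z, (∑ u, (1 / 2 : ℝ) * V u z ^ (1 / (1 + ρ))) ^ (1 + ρ))

/-! Write `s = -r₀ ∈ (0, 1)` and `P` for the output distribution. Since
`V (V / P)^r₀ = V^(1-s) P^s`, the expectation is `2^(s b) ∑_z A(z) P(z)^s` with
`A(z) = ∑_u ½ V(z|u)^(1-s)`. Hölder's inequality with exponents `1/(1-s)` and `1/s`, together
with `∑_z P(z) = 1`, bounds the sum by `(∑_z A(z)^(1/(1-s)))^(1-s)`, and this is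
`2^(-(1-s) E₀(s/(1-s), V))`. -/

open Finset Real

theorem Real.mul_div_rpow_eq_rpow_mul_rpow_neg {v p r : ℝ} (hv : 0 ≤ v) (hp : 0 ≤ p)
    (hr : 1 + r ≠ 0) :
    v * (v / p) ^ r = v ^ (1 + r) * p ^ (-r) := by
  rw [div_rpow hv hp, rpow_neg hp, rpow_add' hv hr, rpow_one, ← mul_div_assoc, div_eq_mul_inv]

theorem Real.sum_mul_rpow_le_Lp_mul_rpow_sum {ι : Type*} (s : Finset ι) {f g : ι → ℝ}
    {θ : ℝ} (hθ₀ : 0 < θ) (hθ₁ : θ < 1) (hf : ∀ i ∈ s, 0 ≤ f i) (hg : ∀ i ∈ s, 0 ≤ g i) :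
    ∑ i ∈ s, f i * g i ^ θ ≤
      (∑ i ∈ s, f i ^ (1 / (1 - θ))) ^ (1 - θ) * (∑ i ∈ s, g i) ^ θ := by
  have hpq : HolderConjugate (1 / (1 - θ)) (1 / θ) :=
    ⟨by simp, by simp [hθ₁], by simp [hθ₀]⟩
  have hgθ : ∀ i ∈ s, (g i ^ θ) ^ (1 / θ) = g i := fun i hi => by
    rw [one_div, rpow_rpow_inv (hg i hi) hθ₀.ne']
  have h := inner_le_Lp_mul_Lq_of_nonneg s hpq hf fun i hi => rpow_nonneg (hg i hi) θ
  rwa [sum_congr rfl hgθ, one_div_one_div, one_div_one_div] at h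

theorem Real.logb_sum_mul_rpow_le {ι : Type*} (s : Finset ι) {f g : ι → ℝ} {b θ : ℝ}
    (hb : 1 < b) (hθ₀ : 0 < θ) (hθ₁ : θ < 1) (hf : ∀ i ∈ s, 0 ≤ f i)
    (hg : ∀ i ∈ s, 0 ≤ g i) (hg₁ : ∑ i ∈ s, g i = 1) (hS : 0 < ∑ i ∈ s, f i * g i ^ θ) :
    logb b (∑ i ∈ s, f i * g i ^ θ) ≤
      (1 - θ) * logb b (∑ i ∈ s, f i ^ (1 / (1 - θ))) := by
  have hholder := sum_mul_rpow_le_Lp_mul_rpow_sum s hθ₀ hθ₁ hf hg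
  rw [hg₁, one_rpow, mul_one] at hholder
  have hT : 0 < ∑ i ∈ s, f i ^ (1 / (1 - θ)) := by
    refine (sum_nonneg fun i hi => rpow_nonneg (hf i hi) _).lt_of_ne' fun h => ?_
    rw [h, zero_rpow (by linarith)] at hholder
    linarith
  rw [← logb_rpow_eq_mul_logb_of_pos hT]
  exact logb_le_logb_of_le hb hS hholder

section Channel

variable {U Z : Type*} [Fintype U]

def outputDist (q : U → ℝ) (V : U → Z → ℝ) (z : Z) : ℝ := ∑ u, q u * V u z

variable {q : U → ℝ} {V : U → Z → ℝ}

theorem outputDist_nonneg (hq : ∀ u, 0 ≤ q u) (hV : ∀ u z, 0 ≤ V u z) (z : Z) :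
    0 ≤ outputDist q V z :=
  sum_nonneg fun u _ => mul_nonneg (hq u) (hV u z)

variable [Fintype Z]

theorem sum_outputDist (hsum : ∀ u, ∑ z, V u z = 1) : ∑ z, outputDist q V z = ∑ u, q u := by
  simp only [outputDist, sum_comm (γ := Z), ← mul_sum, hsum, mul_one]

theorem sum_mul_sum_mul_div_outputDist_rpow (hq : ∀ u, 0 ≤ q u) (hV : ∀ u z, 0 ≤ V u z)
    {r : ℝ} (hr : 1 + r ≠ 0) (c : ℝ) :
    ∑ u, q u * ∑ z, V u z * (V u z / outputDist q V z) ^ r * c =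
      c * ∑ z, (∑ u, q u * V u z ^ (1 + r)) * outputDist q V z ^ (-r) := by
  simp only [mul_div_rpow_eq_rpow_mul_rpow_neg (hV _ _) (outputDist_nonneg hq hV _) hr,
    mul_sum, sum_mul]
  rw [sum_comm]
  exact sum_congr rfl fun z _ => sum_congr rfl fun u _ => by ring

theorem sum_mul_outputDist_rpow_pos (hq : ∀ u, 0 ≤ q u) (hV : ∀ u z, 0 ≤ V u z) {u₀ : U}
    (hqu₀ : 0 < q u₀) {z₀ : Z} (hVz₀ : 0 < V u₀ z₀) (r : ℝ) :
    0 < ∑ z, (∑ u, q u * V u z ^ (1 + r)) * outputDist q V z ^ (-r) := by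
  have hA : ∀ z, 0 ≤ ∑ u, q u * V u z ^ (1 + r) := fun z =>
    sum_nonneg fun u _ => mul_nonneg (hq u) (rpow_nonneg (hV u z) _)
  have hP₀ : 0 < outputDist q V z₀ :=
    (mul_pos hqu₀ hVz₀).trans_le <|
      single_le_sum (fun u _ => mul_nonneg (hq u) (hV u z₀)) (mem_univ u₀)
  have hA₀ : 0 < ∑ u, q u * V u z₀ ^ (1 + r) :=
    (mul_pos hqu₀ (rpow_pos_of_pos hVz₀ _)).trans_le <|
      single_le_sum (fun u _ => mul_nonneg (hq u) (rpow_nonneg (hV u z₀) _)) (mem_univ u₀)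
  exact (mul_pos hA₀ (rpow_pos_of_pos hP₀ _)).trans_le <|
    single_le_sum (fun z _ => mul_nonneg (hA z) (rpow_nonneg (outputDist_nonneg hq hV z) _))
      (mem_univ z₀)

end Channel

theorem E0_neg_div_one_add {Z : Type*} [Fintype Z] (V : Bool → Z → ℝ) {r : ℝ}
    (hr : 1 + r ≠ 0) :
    E0 (-r / (1 + r)) V =
      -logb 2 (∑ z, (∑ u, (1 / 2 : ℝ) * V u z ^ (1 + r)) ^ (1 / (1 + r))) := by
  have hρ : 1 + -r / (1 + r) = 1 / (1 + r) := by field_simp; ring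
  rw [E0, hρ, one_div_one_div]

/-- Lemma 1: the semi-invariant MGF of the correct-path metric
`γ = log₂(V(z|u)/P(z)) - b` satisfies
`h(r₀) ≤ -r₀ b - (1+r₀) E₀(-r₀/(1+r₀), V)` for `r₀ ∈ (-1,0)`. -/
theorem semiInvariantMGF_correct_path_le
    {Z : Type*} [Fintype Z] (V : Bool → Z → ℝ)
    (hV : ∀ u z, 0 ≤ V u z) (hsum : ∀ u, ∑ z, V u z = 1)
    (b r₀ : ℝ) (hr₀ : r₀ ∈ Set.Ioo (-1 : ℝ) 0) :
    Real.logb 2 (∑ u, (1 / 2 : ℝ) * ∑ z, V u z *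
        (V u z / ∑ u', (1 / 2 : ℝ) * V u' z) ^ r₀ * (2 : ℝ) ^ (-r₀ * b))
      ≤ -r₀ * b - (1 + r₀) * E0 (-r₀ / (1 + r₀)) V := by
  obtain ⟨hr₁, hr₀⟩ := hr₀
  have hq : ∀ u : Bool, (0 : ℝ) ≤ 1 / 2 := fun _ => by norm_num
  have hr : 1 + r₀ ≠ 0 := by linarith
  obtain ⟨z, -, hz⟩ := exists_ne_zero_of_sum_ne_zero ((hsum true).trans_ne one_ne_zero)
  have hS := sum_mul_outputDist_rpow_pos hq hV (u₀ := true) (by norm_num)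
    ((hV true z).lt_of_ne' hz) r₀
  have hP₁ : ∑ z, outputDist (fun _ => (1 / 2 : ℝ)) V z = 1 := by
    rw [sum_outputDist hsum]; norm_num
  have hlog := logb_sum_mul_rpow_le univ one_lt_two (neg_pos.2 hr₀) (by linarith)
    (fun z _ => sum_nonneg fun u _ => mul_nonneg (hq u) (rpow_nonneg (hV u z) _))
    (fun z _ => outputDist_nonneg hq hV z) hP₁ hS
  rw [sub_neg_eq_add] at hlog
  change logb 2 (∑ u, (1 / 2 : ℝ) * ∑ z, V u z *
    (V u z / outputDist (fun _ => (1 / 2 : ℝ)) V z) ^ r₀ * (2 : ℝ) ^ (-r₀ * b)) ≤ _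
  rw [sum_mul_sum_mul_div_outputDist_rpow hq hV hr, logb_mul (by positivity) hS.ne',
    logb_rpow two_pos (by norm_num), E0_neg_div_one_add V hr]
  linarith
end

section
/- (Lemma 2) Let γ̃ = log₂(V(z|ũ)/P(z)) - b be the wrong-path metric where z ~ P(·) and ũ is uniform on {0,1} independent of z. For any r ∈ (0,1), log₂ E[2^{rγ̃}] ≤ -r b - r E_0((1-r)/r, V), where E_0(ρ,V) = -log₂ Σ_z [Σ_u (1/2) V(z|u)^{1/(1+ρ)}]^{1+ρ}. -/
/-!
With `P(z) = ∑ᵤ ½ V(z|u)` and `A(z) = ∑ᵥ ½ V(z|v)^r`, Hölder's inequality with the conjugate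
exponents `1/(1-r)` and `1/r` gives `∑_z P(z)^(1-r) A(z) ≤ (∑_z P(z))^(1-r) (∑_z A(z)^(1/r))^r`,
where `∑_z P(z) = 1`. At `ρ = (1-r)/r` one has `1/(1+ρ) = r` and `1+ρ = 1/r`, so the last factor
is exactly `2^(-r E₀(ρ, V))`; taking `log₂` gives the claim.
-/

open Finset Real

theorem Real.sum_rpow_one_sub_mul_le_of_nonneg {ι : Type*} (s : Finset ι) {r : ℝ}
    (hr : r ∈ Set.Ioo (0 : ℝ) 1) {f g : ι → ℝ} (hf : ∀ i ∈ s, 0 ≤ f i) (hg : ∀ i ∈ s, 0 ≤ g i) :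
    ∑ i ∈ s, f i ^ (1 - r) * g i ≤ (∑ i ∈ s, f i) ^ (1 - r) * (∑ i ∈ s, g i ^ r⁻¹) ^ r := by
  obtain ⟨hr0, hr1⟩ := hr
  have hf' : ∀ i ∈ s, (f i ^ (1 - r)) ^ (1 - r)⁻¹ = f i := fun i hi ↦ by
    rw [← rpow_mul (hf i hi), mul_inv_cancel₀ (by linarith), rpow_one]
  have := inner_le_Lp_mul_Lq_of_nonneg s (HolderConjugate.one_sub_inv_inv hr0 hr1)
    (fun i hi ↦ rpow_nonneg (hf i hi) (1 - r)) hg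
  rwa [sum_congr rfl hf', one_div, inv_inv, one_div, inv_inv] at this

theorem E0_one_sub_div_self {Z : Type*} [Fintype Z] (V : Bool → Z → ℝ) {r : ℝ} (hr : r ≠ 0) :
    E0 ((1 - r) / r) V = -logb 2 (∑ z, (∑ u, (1 / 2 : ℝ) * V u z ^ r) ^ r⁻¹) := by
  have hρ : 1 + (1 - r) / r = r⁻¹ := by field_simp; ring
  simp only [E0, hρ, one_div, inv_inv]

theorem sum_sum_half_mul_eq_one {Z : Type*} [Fintype Z] (V : Bool → Z → ℝ)
    (hsum : ∀ u, ∑ z, V u z = 1) : ∑ z, ∑ u, (1 / 2 : ℝ) * V u z = 1 := by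
  rw [sum_comm]
  simp [← mul_sum, hsum]

theorem sum_mixture_rpow_mul_pos {Z : Type*} [Fintype Z] (V : Bool → Z → ℝ)
    (hV : ∀ u z, 0 ≤ V u z) (hsum : ∀ u, ∑ z, V u z = 1) (r : ℝ) :
    0 < ∑ z, (∑ u, (1 / 2 : ℝ) * V u z) ^ (1 - r) * ∑ v, (1 / 2 : ℝ) * V v z ^ r := by
  obtain ⟨z, -, hz⟩ : ∃ z ∈ univ, 0 < V true z :=
    (sum_pos_iff_of_nonneg fun z _ ↦ hV true z).1 (by rw [hsum]; exact one_pos)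
  have hP : 0 < ∑ u, (1 / 2 : ℝ) * V u z := by
    rw [Fintype.sum_bool]; linarith [hV false z]
  have hA : 0 < ∑ v, (1 / 2 : ℝ) * V v z ^ r := by
    rw [Fintype.sum_bool]; linarith [rpow_pos_of_pos hz r, rpow_nonneg (hV false z) r]
  refine sum_pos' (fun y _ ↦ ?_) ⟨z, mem_univ z, by positivity⟩
  have := hV true y; have := hV false y
  simp only [Fintype.sum_bool]
  positivity

/-- Lemma 2: the semi-invariant MGF of the wrong-path metric
`γ̃ = log₂(V(z|ũ)/P(z)) - b` (with `z ~ P` and `ũ` uniform independent of `z`)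
satisfies `log₂ E[2^{rγ̃}] ≤ -r b - r E₀((1-r)/r, V)` for `r ∈ (0,1)`. -/
theorem semiInvariantMGF_wrong_path_le
    {Z : Type*} [Fintype Z] (V : Bool → Z → ℝ)
    (hV : ∀ u z, 0 ≤ V u z) (hsum : ∀ u, ∑ z, V u z = 1)
    (b r : ℝ) (hr : r ∈ Set.Ioo (0 : ℝ) 1) :
    Real.logb 2 ((2 : ℝ) ^ (-r * b) *
        ∑ z, (∑ u, (1 / 2 : ℝ) * V u z) ^ (1 - r) *
          ∑ v, (1 / 2 : ℝ) * V v z ^ r)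
      ≤ -r * b - r * E0 ((1 - r) / r) V := by
  set P : Z → ℝ := fun z ↦ ∑ u, (1 / 2 : ℝ) * V u z
  set A : Z → ℝ := fun z ↦ ∑ v, (1 / 2 : ℝ) * V v z ^ r
  set T := ∑ z, A z ^ r⁻¹
  have hP : ∀ z, 0 ≤ P z := fun z ↦ sum_nonneg fun u _ ↦ by have := hV u z; positivity
  have hA : ∀ z, 0 ≤ A z := fun z ↦ sum_nonneg fun v _ ↦ by have := hV v z; positivity
  have hS : 0 < ∑ z, P z ^ (1 - r) * A z := sum_mixture_rpow_mul_pos V hV hsum r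
  have hHolder : ∑ z, P z ^ (1 - r) * A z ≤ T ^ r := by
    have := sum_rpow_one_sub_mul_le_of_nonneg univ hr (fun z _ ↦ hP z) (fun z _ ↦ hA z)
    rwa [sum_sum_half_mul_eq_one V hsum, one_rpow, one_mul] at this
  have hT0 : 0 ≤ T := sum_nonneg fun z _ ↦ rpow_nonneg (hA z) _
  have hT : 0 < T :=
    hT0.lt_of_ne' fun h ↦ (hS.trans_le hHolder).ne' (by rw [h, zero_rpow hr.1.ne'])
  rw [E0_one_sub_div_self V hr.1.ne', logb_mul (by positivity) hS.ne',
    logb_rpow two_pos (by norm_num)]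
  calc -r * b + logb 2 _ ≤ -r * b + logb 2 (T ^ r) := by gcongr; norm_num
    _ = _ := by rw [logb_rpow_eq_mul_logb_of_pos hT]; ring
end

section
/- (Lemma 3, unbiased core) For independent u, ũ uniform on {0,1} and z ~ V(·|u), and any r ∈ (0,1), E[2^{r(log₂ V(z|ũ) - log₂ V(z|u))}] ≤ 2^{-(1-r)E_0(r/(1-r),V)} · 2^{-r E_0((1-r)/r, V)}, where E_0(ρ,V) = -log₂ Σ_z [Σ_u (1/2) V(z|u)^{1/(1+ρ)}]^{1+ρ}. -/
open Finset

theorem Real.inner_le_Lp_mul_Lq_of_nonneg_of_add_eq_one {ι : Type*} (s : Finset ι)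
    {f g : ι → ℝ} {a b : ℝ} (ha : 0 < a) (hb : 0 < b) (hab : a + b = 1)
    (hf : ∀ i ∈ s, 0 ≤ f i) (hg : ∀ i ∈ s, 0 ≤ g i) :
    ∑ i ∈ s, f i * g i ≤ (∑ i ∈ s, f i ^ (1 / a)) ^ a * (∑ i ∈ s, g i ^ (1 / b)) ^ b := by
  have hconj : Real.HolderConjugate (1 / a) (1 / b) := by
    rw [Real.holderConjugate_iff]
    refine ⟨?_, by simpa only [one_div, inv_inv] using hab⟩
    rw [lt_div_iff₀ ha]
    linarith
  simpa only [one_div_one_div] using Real.inner_le_Lp_mul_Lq_of_nonneg s hconj hf hg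

/-- Equality for `0 < x`; at `x = 0` the junk value `logb b 0 = 0` makes the right side `1`. -/
theorem Real.rpow_le_rpow_logb_mul {b x : ℝ} (c : ℝ) (hb : 0 < b) (hb₁ : b ≠ 1) (hx : 0 ≤ x) :
    x ^ c ≤ b ^ (Real.logb b x * c) := by
  rcases hx.eq_or_lt with rfl | hx
  · rw [Real.logb_zero, zero_mul, Real.rpow_zero]
    exact Real.zero_rpow_le_one c
  · rw [Real.rpow_mul hb.le, Real.rpow_logb hb hb₁ hx]

theorem sum_half_mul_rpow_nonneg {Z : Type*} {V : Bool → Z → ℝ} (hV : ∀ u z, 0 ≤ V u z)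
    (s : ℝ) (z : Z) : 0 ≤ ∑ u, (1 / 2 : ℝ) * V u z ^ s :=
  sum_nonneg fun u _ => mul_nonneg (by norm_num) (Real.rpow_nonneg (hV u z) s)

theorem rpow_sum_rpow_le_two_rpow_neg_mul_E0 {Z : Type*} [Fintype Z] {V : Bool → Z → ℝ}
    (hV : ∀ u z, 0 ≤ V u z) {s ρ : ℝ} (hρ : 1 + ρ = 1 / s) :
    (∑ z, (∑ u, (1 / 2 : ℝ) * V u z ^ s) ^ (1 / s)) ^ s ≤ (2 : ℝ) ^ (-s * E0 ρ V) := by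
  have hsum : 0 ≤ ∑ z, (∑ u, (1 / 2 : ℝ) * V u z ^ s) ^ (1 / s) :=
    sum_nonneg fun z _ => Real.rpow_nonneg (sum_half_mul_rpow_nonneg hV s z) _
  rw [E0, hρ, one_div_one_div, neg_mul_neg, mul_comm s]
  exact Real.rpow_le_rpow_logb_mul s two_pos (by norm_num) hsum

theorem mgf_metric_difference_le_general
    {Z : Type*} [Fintype Z] (V : Bool → Z → ℝ)
    (hV : ∀ u z, 0 ≤ V u z)
    (r : ℝ) (hr : r ∈ Set.Ioo (0 : ℝ) 1) :
    ∑ z, (∑ u, (1 / 2 : ℝ) * V u z ^ (1 - r)) * (∑ v, (1 / 2 : ℝ) * V v z ^ r)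
      ≤ (2 : ℝ) ^ (-(1 - r) * E0 (r / (1 - r)) V) *
        (2 : ℝ) ^ (-r * E0 ((1 - r) / r) V) := by
  obtain ⟨hr₀, hr₁⟩ := hr
  have h1r : 0 < 1 - r := sub_pos.mpr hr₁
  have hF := sum_half_mul_rpow_nonneg hV
  have hρ₁ : 1 + r / (1 - r) = 1 / (1 - r) := by field_simp; ring
  have hρ₂ : 1 + (1 - r) / r = 1 / r := by field_simp; ring
  calc _ ≤ (∑ z, (∑ u, (1 / 2 : ℝ) * V u z ^ (1 - r)) ^ (1 / (1 - r))) ^ (1 - r) *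
          (∑ z, (∑ u, (1 / 2 : ℝ) * V u z ^ r) ^ (1 / r)) ^ r :=
        Real.inner_le_Lp_mul_Lq_of_nonneg_of_add_eq_one _ h1r hr₀ (sub_add_cancel 1 r)
          (fun z _ => hF _ z) (fun z _ => hF _ z)
    _ ≤ _ :=
        mul_le_mul (rpow_sum_rpow_le_two_rpow_neg_mul_E0 hV hρ₁)
          (rpow_sum_rpow_le_two_rpow_neg_mul_E0 hV hρ₂)
          (Real.rpow_nonneg (sum_nonneg fun z _ => Real.rpow_nonneg (hF r z) _) r)
          (Real.rpow_nonneg zero_le_two _)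

/-- Lemma 3, unbiased core: for independent `u, ũ` uniform on `{0,1}` and
`z ~ V(·|u)`, and any `r ∈ (0,1)`,
`E[2^{r(log₂ V(z|ũ) - log₂ V(z|u))}] ≤ 2^{-(1-r)E₀(r/(1-r),V)} · 2^{-r E₀((1-r)/r,V)}`.
The left-hand side equals `Σ_z (Σ_u ½ V(z|u)^{1-r})(Σ_ũ ½ V(z|ũ)^r)`. -/
theorem mgf_metric_difference_le
    {Z : Type*} [Fintype Z] (V : Bool → Z → ℝ)
    (hV : ∀ u z, 0 ≤ V u z) (hsum : ∀ u, ∑ z, V u z = 1)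
    (r : ℝ) (hr : r ∈ Set.Ioo (0 : ℝ) 1) :
    ∑ z, (∑ u, (1 / 2 : ℝ) * V u z ^ (1 - r)) * (∑ v, (1 / 2 : ℝ) * V v z ^ r)
      ≤ (2 : ℝ) ^ (-(1 - r) * E0 (r / (1 - r)) V) *
        (2 : ℝ) ^ (-r * E0 ((1 - r) / r) V) :=
  mgf_metric_difference_le_general V hV r hr
end

section
/- (Lemma 3) Let γ = log₂(V(z|u)/P(z)) - b and γ̃ = log₂(V(z|ũ)/P(z)) - b with u, ũ independent uniform on {0,1} and z ~ V(·|u). Suppose r ∈ (0,1) and b ≤ ((1-r)/r) E_0(r/(1-r), V). Then log₂ E[2^{r(γ̃ - γ)}] ≤ -r b - r E_0((1-r)/r, V). -/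
open Finset Real

theorem logb_sum_mul_le_of_holder {ι : Type*} (t : Finset ι) {f g : ι → ℝ}
    (hf : ∀ i ∈ t, 0 ≤ f i) (hg : ∀ i ∈ t, 0 ≤ g i) {r : ℝ} (hr : r ∈ Set.Ioo (0 : ℝ) 1)
    (hpos : 0 < ∑ i ∈ t, f i * g i) :
    logb 2 (∑ i ∈ t, f i * g i) ≤
      (1 - r) * logb 2 (∑ i ∈ t, f i ^ (1 / (1 - r))) + r * logb 2 (∑ i ∈ t, g i ^ (1 / r)) := by
  obtain ⟨hr0, hr1⟩ := hr
  have hpq : HolderConjugate (1 / (1 - r)) (1 / r) :=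
    ⟨by rw [one_div, one_div, inv_inv, inv_inv, inv_one]; ring, by bound, by bound⟩
  have holder := inner_le_Lp_mul_Lq_of_nonneg t hpq hf hg
  rw [one_div_one_div, one_div_one_div] at holder
  have hF_nonneg : 0 ≤ ∑ i ∈ t, f i ^ (1 / (1 - r)) :=
    sum_nonneg fun i hi ↦ rpow_nonneg (hf i hi) _
  have hG_nonneg : 0 ≤ ∑ i ∈ t, g i ^ (1 / r) := sum_nonneg fun i hi ↦ rpow_nonneg (hg i hi) _
  generalize ∑ i ∈ t, f i ^ (1 / (1 - r)) = F at holder hF_nonneg ⊢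
  generalize ∑ i ∈ t, g i ^ (1 / r) = G at holder hG_nonneg ⊢
  have hF : 0 < F := hF_nonneg.lt_of_ne fun hF0 ↦ by
    rw [← hF0, zero_rpow (by linarith)] at holder
    linarith
  have hG : 0 < G := hG_nonneg.lt_of_ne fun hG0 ↦ by
    rw [← hG0, zero_rpow hr0.ne'] at holder
    linarith
  calc logb 2 (∑ i ∈ t, f i * g i) ≤ logb 2 (F ^ (1 - r) * G ^ r) :=
        logb_le_logb_of_le one_lt_two hpos holder
    _ = (1 - r) * logb 2 F + r * logb 2 G := by
        rw [logb_mul (rpow_pos_of_pos hF _).ne' (rpow_pos_of_pos hG _).ne',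
          logb_rpow_eq_mul_logb_of_pos hF, logb_rpow_eq_mul_logb_of_pos hG]

section halfPowerSum

variable {Z : Type*} (V : Bool → Z → ℝ)

noncomputable def halfPowerSum (s : ℝ) (z : Z) : ℝ := ∑ u, (1 / 2 : ℝ) * V u z ^ s

theorem E0_one_sub_div [Fintype Z] {s : ℝ} (hs : s ≠ 0) :
    E0 ((1 - s) / s) V = -logb 2 (∑ z, halfPowerSum V s z ^ (1 / s)) := by
  have hexp : 1 + (1 - s) / s = 1 / s := by field_simp; ring
  rw [E0, hexp, one_div_one_div]
  rfl

theorem E0_div_one_sub [Fintype Z] {s : ℝ} (hs : s ≠ 1) :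
    E0 (s / (1 - s)) V = -logb 2 (∑ z, halfPowerSum V (1 - s) z ^ (1 / (1 - s))) := by
  rw [← E0_one_sub_div V (sub_ne_zero.mpr hs.symm), sub_sub_cancel]

variable {V}

theorem halfPowerSum_nonneg (hV : ∀ u z, 0 ≤ V u z) (s : ℝ) (z : Z) : 0 ≤ halfPowerSum V s z :=
  sum_nonneg fun u _ ↦ mul_nonneg one_half_pos.le (rpow_nonneg (hV u z) s)

theorem halfPowerSum_pos (hV : ∀ u z, 0 ≤ V u z) {u : Bool} {z : Z} (hz : 0 < V u z) (s : ℝ) :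
    0 < halfPowerSum V s z :=
  sum_pos' (fun v _ ↦ mul_nonneg one_half_pos.le (rpow_nonneg (hV v z) s))
    ⟨u, mem_univ _, mul_pos one_half_pos (rpow_pos_of_pos hz s)⟩

theorem sum_halfPowerSum_mul_pos [Fintype Z] (hV : ∀ u z, 0 ≤ V u z) {u : Bool}
    (hu : 0 < ∑ z, V u z) (s t : ℝ) : 0 < ∑ z, halfPowerSum V s z * halfPowerSum V t z := by
  obtain ⟨z, -, hz⟩ : ∃ z ∈ univ, 0 < V u z := exists_lt_of_sum_lt (by simpa using hu)
  exact sum_pos' (fun z _ ↦ mul_nonneg (halfPowerSum_nonneg hV s z) (halfPowerSum_nonneg hV t z))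
    ⟨z, mem_univ _, mul_pos (halfPowerSum_pos hV hz s) (halfPowerSum_pos hV hz t)⟩

end halfPowerSum

/-- Lemma 3: with `γ = log₂(V(z|u)/P(z)) - b`, `γ̃ = log₂(V(z|ũ)/P(z)) - b`,
`u, ũ` independent uniform and `z ~ V(·|u)`, `r ∈ (0,1)` and
`b ≤ ((1-r)/r) E₀(r/(1-r), V)`, one has
`log₂ E[2^{r(γ̃-γ)}] ≤ -r b - r E₀((1-r)/r, V)`.
Here `E[2^{r(γ̃-γ)}] = Σ_z (Σ_u ½ V(z|u)^{1-r})(Σ_ũ ½ V(z|ũ)^r)` since the biases cancel. -/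
theorem semiInvariantMGF_metric_difference_le
    {Z : Type*} [Fintype Z] (V : Bool → Z → ℝ)
    (hV : ∀ u z, 0 ≤ V u z) (hsum : ∀ u, ∑ z, V u z = 1)
    (b r : ℝ) (hr : r ∈ Set.Ioo (0 : ℝ) 1)
    (hb : b ≤ ((1 - r) / r) * E0 (r / (1 - r)) V) :
    Real.logb 2
        (∑ z, (∑ u, (1 / 2 : ℝ) * V u z ^ (1 - r)) * (∑ v, (1 / 2 : ℝ) * V v z ^ r))
      ≤ -r * b - r * E0 ((1 - r) / r) V := by
  have holder := logb_sum_mul_le_of_holder univ (fun z _ ↦ halfPowerSum_nonneg hV (1 - r) z)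
    (fun z _ ↦ halfPowerSum_nonneg hV r z) hr
    (sum_halfPowerSum_mul_pos hV (u := true) (by simp [hsum]) (1 - r) r)
  have hrb : r * b ≤ (1 - r) * E0 (r / (1 - r)) V := by
    calc r * b ≤ r * ((1 - r) / r * E0 (r / (1 - r)) V) := mul_le_mul_of_nonneg_left hb hr.1.le
      _ = (1 - r) * E0 (r / (1 - r)) V := by field_simp [hr.1.ne']
  rw [E0_div_one_sub V hr.2.ne] at hrb
  rw [E0_one_sub_div V hr.1.ne']
  exact holder.trans (by linarith)
end

section
/- Gallager's E_0 function divided by ρ is nonincreasing in ρ > 0: for a binary-input channel V with uniform input and 0 < ρ₁ ≤ ρ₂, E_0(ρ₂,V)/ρ₂ ≤ E_0(ρ₁,V)/ρ₁. In particular, for 0 < δ < 1, E_0(1,V) ≤ E_0(δ,V)/δ. -/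
/-!
Two applications of Hölder's inequality, first over the inputs for each fixed output and then
over the outputs, show that `ρ ↦ log ∑_z (∑_u w(u) V(z|u)^(1/(1+ρ)))^(1+ρ)` is convex on
`(-1, ∞)`, so `E₀(·, V)` is concave there. When every row of `V` sums to `1` we have `E₀(0, V) = 0`,
so `E₀(ρ, V)/ρ` is the slope of the secant of a concave function through the origin, which is
nonincreasing in `ρ`.
-/

open Finset

theorem Real.sum_rpow_mul_rpow_le {ι : Type*} (s : Finset ι) {f g : ι → ℝ}
    (hf : ∀ i ∈ s, 0 ≤ f i) (hg : ∀ i ∈ s, 0 ≤ g i) {a b : ℝ} (ha : 0 < a) (hb : 0 < b)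
    (hab : a + b = 1) :
    ∑ i ∈ s, f i ^ a * g i ^ b ≤ (∑ i ∈ s, f i) ^ a * (∑ i ∈ s, g i) ^ b := by
  have hpow {c : ℝ} (hc : 0 < c) {x : ℝ} (hx : 0 ≤ x) : (x ^ c) ^ c⁻¹ = x := by
    rw [← Real.rpow_mul hx, mul_inv_cancel₀ hc.ne', Real.rpow_one]
  have := Real.inner_le_Lp_mul_Lq_of_nonneg s (Real.HolderConjugate.inv_inv ha hb hab)
    (fun i hi => Real.rpow_nonneg (hf i hi) a) (fun i hi => Real.rpow_nonneg (hg i hi) b)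
  simpa only [one_div, inv_inv, sum_congr rfl fun i hi => hpow ha (hf i hi),
    sum_congr rfl fun i hi => hpow hb (hg i hi)] using this

section Gallager

variable {X Z : Type*} [Fintype X] [Fintype Z]

/-- The sum inside `E0`, for an arbitrary finite input alphabet and input weights `w`:
`E0 ρ V = -Real.logb 2 (gallagerSum (fun _ => 1 / 2) V ρ)`. -/
noncomputable def gallagerSum (w : X → ℝ) (V : X → Z → ℝ) (ρ : ℝ) : ℝ :=
  ∑ z, (∑ x, w x * V x z ^ (1 / (1 + ρ))) ^ (1 + ρ)

theorem rpow_sum_mul_rpow_one_div_le {w v : X → ℝ} (hw : ∀ x, 0 ≤ w x) (hv : ∀ x, 0 ≤ v x)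
    {p q a b : ℝ} (hp : 0 < p) (hq : 0 < q) (ha : 0 < a) (hb : 0 < b) (hab : a + b = 1) :
    (∑ x, w x * v x ^ (1 / (a * p + b * q))) ^ (a * p + b * q) ≤
      ((∑ x, w x * v x ^ (1 / p)) ^ p) ^ a * ((∑ x, w x * v x ^ (1 / q)) ^ q) ^ b := by
  set r := a * p + b * q
  have hr : 0 < r := by positivity
  set μ := a * p / r
  set ν := b * q / r
  have hμ : μ * r = a * p := div_mul_cancel₀ _ hr.ne'
  have hν : ν * r = b * q := div_mul_cancel₀ _ hr.ne'
  have hμν : μ + ν = 1 := by rw [← add_div, div_self hr.ne']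
  have hexp : 1 / p * μ + 1 / q * ν = 1 / r := by
    simp only [μ, ν]; field_simp; rw [hab]
  have hsplit (x : X) : w x * v x ^ (1 / r) =
      (w x * v x ^ (1 / p)) ^ μ * (w x * v x ^ (1 / q)) ^ ν := by
    rw [Real.mul_rpow (hw x) (Real.rpow_nonneg (hv x) _),
      Real.mul_rpow (hw x) (Real.rpow_nonneg (hv x) _), ← Real.rpow_mul (hv x),
      ← Real.rpow_mul (hv x), mul_mul_mul_comm, ← Real.rpow_add' (hw x) (by simp [hμν]),
      ← Real.rpow_add' (hv x) (by rw [hexp]; positivity), hμν, hexp, Real.rpow_one]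
  have hS (s : ℝ) : 0 ≤ ∑ x, w x * v x ^ s :=
    sum_nonneg fun x _ => mul_nonneg (hw x) (Real.rpow_nonneg (hv x) s)
  have hHolder : ∑ x, w x * v x ^ (1 / r) ≤
      (∑ x, w x * v x ^ (1 / p)) ^ μ * (∑ x, w x * v x ^ (1 / q)) ^ ν := by
    simp only [hsplit]
    exact Real.sum_rpow_mul_rpow_le _ (fun x _ => mul_nonneg (hw x) (Real.rpow_nonneg (hv x) _))
      (fun x _ => mul_nonneg (hw x) (Real.rpow_nonneg (hv x) _)) (by positivity) (by positivity) hμν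
  calc (∑ x, w x * v x ^ (1 / r)) ^ r
      ≤ ((∑ x, w x * v x ^ (1 / p)) ^ μ * (∑ x, w x * v x ^ (1 / q)) ^ ν) ^ r := by gcongr; exact hS _
    _ = _ := by
        rw [Real.mul_rpow (Real.rpow_nonneg (hS _) _) (Real.rpow_nonneg (hS _) _),
          ← Real.rpow_mul (hS _), ← Real.rpow_mul (hS _), ← Real.rpow_mul (hS _),
          ← Real.rpow_mul (hS _), hμ, hν, mul_comm a, mul_comm b]

theorem gallagerSum_le_rpow_mul_rpow {w : X → ℝ} {V : X → Z → ℝ} (hw : ∀ x, 0 ≤ w x)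
    (hV : ∀ x z, 0 ≤ V x z) {ρ₁ ρ₂ a b : ℝ} (h₁ : -1 < ρ₁) (h₂ : -1 < ρ₂) (ha : 0 < a)
    (hb : 0 < b) (hab : a + b = 1) :
    gallagerSum w V (a * ρ₁ + b * ρ₂) ≤ gallagerSum w V ρ₁ ^ a * gallagerSum w V ρ₂ ^ b := by
  have hexp : 1 + (a * ρ₁ + b * ρ₂) = a * (1 + ρ₁) + b * (1 + ρ₂) := by
    linear_combination -hab
  have hS (ρ : ℝ) (z : Z) : 0 ≤ (∑ x, w x * V x z ^ (1 / (1 + ρ))) ^ (1 + ρ) :=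
    Real.rpow_nonneg (sum_nonneg fun x _ => mul_nonneg (hw x) (Real.rpow_nonneg (hV x z) _)) _
  unfold gallagerSum
  rw [hexp]
  calc _ ≤ ∑ z, ((∑ x, w x * V x z ^ (1 / (1 + ρ₁))) ^ (1 + ρ₁)) ^ a *
          ((∑ x, w x * V x z ^ (1 / (1 + ρ₂))) ^ (1 + ρ₂)) ^ b :=
        sum_le_sum fun z _ => rpow_sum_mul_rpow_one_div_le hw (fun x => hV x z)
          (by linarith) (by linarith) ha hb hab
    _ ≤ _ := Real.sum_rpow_mul_rpow_le _ (fun z _ => hS ρ₁ z) (fun z _ => hS ρ₂ z) ha hb hab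

theorem gallagerSum_pos {w : X → ℝ} {V : X → Z → ℝ} (hw : ∀ x, 0 < w x) (hV : ∀ x z, 0 ≤ V x z)
    (hV₀ : ∃ x z, 0 < V x z) (ρ : ℝ) : 0 < gallagerSum w V ρ := by
  obtain ⟨x₀, z₀, hx₀z₀⟩ := hV₀
  have hinner (z : Z) : 0 ≤ ∑ x, w x * V x z ^ (1 / (1 + ρ)) :=
    sum_nonneg fun x _ => mul_nonneg (hw x).le (Real.rpow_nonneg (hV x z) _)
  refine sum_pos' (fun z _ => Real.rpow_nonneg (hinner z) _) ⟨z₀, mem_univ _, ?_⟩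
  refine Real.rpow_pos_of_pos (sum_pos' (fun x _ => ?_) ⟨x₀, mem_univ _, ?_⟩) _
  · exact mul_nonneg (hw x).le (Real.rpow_nonneg (hV x z₀) _)
  · exact mul_pos (hw x₀) (Real.rpow_pos_of_pos hx₀z₀ _)

theorem concaveOn_E0 {V : Bool → Z → ℝ} (hV : ∀ u z, 0 ≤ V u z)
    (hV₀ : ∃ u z, 0 < V u z) : ConcaveOn ℝ (Set.Ioi (-1)) (fun ρ => E0 ρ V) := by
  refine concaveOn_iff_forall_pos.2 ⟨convex_Ioi _, fun ρ₁ h₁ ρ₂ h₂ a b ha hb hab => ?_⟩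
  set G := gallagerSum (fun _ : Bool => (1 / 2 : ℝ)) V
  have hG (ρ : ℝ) : 0 < G ρ := gallagerSum_pos (fun _ => by norm_num) hV hV₀ ρ
  have hlog := Real.logb_le_logb_of_le one_lt_two (hG _)
    (gallagerSum_le_rpow_mul_rpow (fun _ => by norm_num) hV h₁ h₂ ha hb hab)
  rw [Real.logb_mul (Real.rpow_pos_of_pos (hG ρ₁) a).ne' (Real.rpow_pos_of_pos (hG ρ₂) b).ne',
    Real.logb_rpow_eq_mul_logb_of_pos (hG ρ₁), Real.logb_rpow_eq_mul_logb_of_pos (hG ρ₂)] at hlog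
  change a * -Real.logb 2 (G ρ₁) + b * -Real.logb 2 (G ρ₂) ≤ -Real.logb 2 (G (a * ρ₁ + b * ρ₂))
  linarith

theorem E0_zero {V : Bool → Z → ℝ} (hsum : ∀ u, ∑ z, V u z = 1) :
    E0 0 V = 0 := by
  norm_num [E0, ← mul_sum, sum_add_distrib, hsum]

end Gallager

/-- Gallager's `E₀(ρ,V)/ρ` is nonincreasing in `ρ > 0`; in particular
for `0 < δ < 1`, `E₀(1,V) ≤ E₀(δ,V)/δ`. -/
theorem E0_div_rho_antitone
    {Z : Type*} [Fintype Z] (V : Bool → Z → ℝ)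
    (hV : ∀ u z, 0 ≤ V u z) (hsum : ∀ u, ∑ z, V u z = 1) :
    (∀ ρ₁ ρ₂ : ℝ, 0 < ρ₁ → ρ₁ ≤ ρ₂ → E0 ρ₂ V / ρ₂ ≤ E0 ρ₁ V / ρ₁)
      ∧ ∀ δ : ℝ, δ ∈ Set.Ioo (0 : ℝ) 1 → E0 1 V ≤ E0 δ V / δ := by
  have hV₀ : ∃ u z, 0 < V u z := by
    obtain ⟨z, -, hz⟩ := exists_ne_zero_of_sum_ne_zero ((hsum true).trans_ne one_ne_zero)
    exact ⟨true, z, (hV true z).lt_of_ne' hz⟩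
  have hslope := (concaveOn_E0 hV hV₀).antitoneOn_slope_gt (x := 0) (by norm_num)
  have main (ρ₁ ρ₂ : ℝ) (h₁ : 0 < ρ₁) (h₁₂ : ρ₁ ≤ ρ₂) : E0 ρ₂ V / ρ₂ ≤ E0 ρ₁ V / ρ₁ := by
    have h := hslope ⟨show (-1 : ℝ) < ρ₁ by linarith, h₁⟩
      ⟨show (-1 : ℝ) < ρ₂ by linarith, h₁.trans_le h₁₂⟩ h₁₂
    simpa [slope_def_field, E0_zero hsum] using h
  exact ⟨main, fun δ hδ => by simpa using main δ 1 hδ.1 hδ.2.le⟩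
end
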